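/- Let μ > 0 and v₀ > 0, and define I(k) = ∫_{−e(k)}^{e(k)} h(k, p(k,y), l(k,y))² · (e(k)² − y²) / (A₁(e(k),y) · A₂(e(k),y)) dy for k > 0. Then the boundary value of the imaginary part of the self-energy at z = e(k) + i0, namely Im Σ(k) := −(1/(8πk)) · I(k), satisfies Im Σ(k) = −c_Bel · k⁵ + O(k⁶) as k → 0⁺, where c_Bel = 3 v₀ / (320 π μ). In particular the phonon damping rate is proportional to k⁵ for small k (Beliaev damping). -/

import Mathlib

open Real Filter Asymptotics Topology MeasureTheory

/-- Bogoliubov dispersion relation (contact interaction). -/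
noncomputable def disp (μ k : ℝ) : ℝ := Real.sqrt (k^4/4 + μ*k^2)

/-- Bogoliubov coefficient σ. -/
noncomputable def sig (μ k : ℝ) : ℝ :=
  Real.sqrt ((Real.sqrt ((disp μ k)^2 + μ^2) + disp μ k) / (2 * disp μ k))

/-- Bogoliubov coefficient γ. -/
noncomputable def gam (μ k : ℝ) : ℝ :=
  Real.sqrt ((Real.sqrt ((disp μ k)^2 + μ^2) - disp μ k) / (2 * disp μ k))

/-- Cubic coupling function h(k,p,l). -/
noncomputable def hcub (μ v₀ k p l : ℝ) : ℝ :=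
  2 * Real.sqrt (μ * v₀) *
    (sig μ p * gam μ k * gam μ l + sig μ l * gam μ k * gam μ p
      + sig μ p * sig μ l * sig μ k - gam μ p * sig μ k * sig μ l
      - gam μ l * sig μ k * sig μ p - gam μ p * gam μ l * gam μ k)

noncomputable def A1 (μ x y : ℝ) : ℝ := Real.sqrt ((x + y)^2 + 4*μ^2)
noncomputable def A2 (μ x y : ℝ) : ℝ := Real.sqrt ((x - y)^2 + 4*μ^2)

/-- p(k,y): unique positive solution of e(p) = (e(k)+y)/2. -/
noncomputable def pp (μ k y : ℝ) : ℝ :=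
  Real.sqrt (2 * (Real.sqrt (((disp μ k + y)/2)^2 + μ^2) - μ))

/-- l(k,y): unique positive solution of e(l) = (e(k)−y)/2. -/
noncomputable def ll (μ k y : ℝ) : ℝ :=
  Real.sqrt (2 * (Real.sqrt (((disp μ k - y)/2)^2 + μ^2) - μ))

/-- The on-shell self-energy integral I(k). -/
noncomputable def I (μ v₀ k : ℝ) : ℝ :=
  ∫ y in (-(disp μ k))..(disp μ k),
    (hcub μ v₀ k (pp μ k y) (ll μ k y))^2 * ((disp μ k)^2 - y^2)
      / (A1 μ (disp μ k) y * A2 μ (disp μ k) y)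

/-- Boundary value of the imaginary part of the self-energy at z = e(k)+i0. -/
noncomputable def ImSigma (μ v₀ k : ℝ) : ℝ := -(1/(8*Real.pi*k)) * I μ v₀ k

/-!
With `u = p²/2 + 2μ`, the Bogoliubov coefficients are `(u ± e(p)) / (2√(e(p) u))`, so on the
energy shell `e(p) = (e + y)/2`, `e(l) = (e - y)/2` (where `e = e(k)`) the integrand of `I(k)` is an
explicit algebraic function of `e` and `y`. Since `p²/2 ≤ e(p)² / (2μ)`, the numerator of the
vertex is `6 e(k) e(p) e(l) + O(e⁵)` and the rest of the denominator is `8μ⁵ + O(e²)`, so the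
integrand is `9v₀/(8μ⁴) · e · e(p)² e(l)² + O(e⁷)` uniformly in `y`. Integrating over `|y| < e`
gives `I(k) = 3v₀ e⁶/(40μ⁴) + O(e⁸)`, and `e(k)⁶ = μ³k⁶ + O(k⁸)`.
-/

/-- At `ε = e(p)` this is the free kinetic energy `p² / 2`. -/
noncomputable def kinetic (μ ε : ℝ) : ℝ := √(ε ^ 2 + μ ^ 2) - μ

lemma kinetic_add (μ ε : ℝ) : kinetic μ ε + μ = √(ε ^ 2 + μ ^ 2) := sub_add_cancel _ _

lemma kinetic_mul_add (μ ε : ℝ) : kinetic μ ε * (kinetic μ ε + 2 * μ) = ε ^ 2 := by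
  have h := Real.sq_sqrt (by positivity : 0 ≤ ε ^ 2 + μ ^ 2)
  rw [← kinetic_add] at h
  linear_combination h

lemma kinetic_nonneg (μ ε : ℝ) : 0 ≤ kinetic μ ε := by
  rw [kinetic, sub_nonneg]
  exact Real.le_sqrt_of_sq_le (by nlinarith [sq_nonneg ε])

lemma kinetic_le {μ : ℝ} (hμ : 0 < μ) (ε : ℝ) : kinetic μ ε ≤ ε ^ 2 / (2 * μ) := by
  rw [le_div_iff₀ (by positivity)]
  nlinarith [kinetic_nonneg μ ε, kinetic_mul_add μ ε]

lemma disp_sqrt_two_mul_kinetic {μ ε : ℝ} (hε : 0 ≤ ε) :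
    disp μ √(2 * kinetic μ ε) = ε := by
  have hp : √(2 * kinetic μ ε) ^ 2 = 2 * kinetic μ ε :=
    Real.sq_sqrt (by linarith [kinetic_nonneg μ ε])
  have h : √(2 * kinetic μ ε) ^ 4 / 4 + μ * √(2 * kinetic μ ε) ^ 2 = ε ^ 2 := by
    linear_combination (√(2 * kinetic μ ε) ^ 2 / 4 + kinetic μ ε / 2 + μ) * hp
      + kinetic_mul_add μ ε
  rw [disp, h, Real.sqrt_sq hε]

lemma disp_pp (μ k y : ℝ) (h : 0 ≤ disp μ k + y) :
    disp μ (pp μ k y) = (disp μ k + y) / 2 :=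
  disp_sqrt_two_mul_kinetic (by linarith)

lemma disp_ll (μ k y : ℝ) (h : y ≤ disp μ k) :
    disp μ (ll μ k y) = (disp μ k - y) / 2 :=
  disp_sqrt_two_mul_kinetic (by linarith)

lemma kinetic_add_two_mul_pos (μ : ℝ) {ε : ℝ} (hε : ε ≠ 0) : 0 < kinetic μ ε + 2 * μ := by
  nlinarith [kinetic_nonneg μ ε, kinetic_mul_add μ ε, sq_pos_of_ne_zero hε]

/-- Both Bogoliubov coefficients: `c = ε` gives `σ`, `c = -ε` gives `γ`. -/
lemma sqrt_bogoliubov {μ ε c : ℝ} (hε : 0 < ε) (hc : c ^ 2 = ε ^ 2) :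
    √((√(ε ^ 2 + μ ^ 2) + c) / (2 * ε))
      = |kinetic μ ε + 2 * μ + c| / (2 * √(ε * (kinetic μ ε + 2 * μ))) := by
  have hu := kinetic_add_two_mul_pos μ hε.ne'
  have hq : √(ε * (kinetic μ ε + 2 * μ)) ^ 2 = ε * (kinetic μ ε + 2 * μ) :=
    Real.sq_sqrt (by positivity)
  have hsq : (√(ε ^ 2 + μ ^ 2) + c) / (2 * ε)
      = (|kinetic μ ε + 2 * μ + c| / (2 * √(ε * (kinetic μ ε + 2 * μ)))) ^ 2 := by
    rw [div_pow, mul_pow, hq, sq_abs, ← kinetic_add]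
    rw [div_eq_div_iff (by positivity) (by positivity)]
    linear_combination (-2) * ε * hc + 2 * ε * kinetic_mul_add μ ε
  rw [hsq, Real.sqrt_sq (by positivity)]

lemma le_kinetic_add_two_mul {μ ε : ℝ} (hμ : 0 ≤ μ) (hε : 0 ≤ ε) :
    ε ≤ kinetic μ ε + 2 * μ := by
  nlinarith [kinetic_nonneg μ ε, kinetic_mul_add μ ε]

lemma sig_eq {μ k : ℝ} (hμ : 0 ≤ μ) (hk : 0 < disp μ k) :
    sig μ k = (kinetic μ (disp μ k) + 2 * μ + disp μ k)
      / (2 * √(disp μ k * (kinetic μ (disp μ k) + 2 * μ))) := by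
  rw [sig, sqrt_bogoliubov hk rfl, abs_of_nonneg]
  linarith [le_kinetic_add_two_mul hμ hk.le]

lemma gam_eq {μ k : ℝ} (hμ : 0 ≤ μ) (hk : 0 < disp μ k) :
    gam μ k = (kinetic μ (disp μ k) + 2 * μ - disp μ k)
      / (2 * √(disp μ k * (kinetic μ (disp μ k) + 2 * μ))) := by
  rw [gam, sub_eq_add_neg, sqrt_bogoliubov hk (neg_sq _), abs_of_nonneg, ← sub_eq_add_neg]
  linarith [le_kinetic_add_two_mul hμ hk.le]

noncomputable def vertexNum (μ e a b : ℝ) : ℝ :=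
  b * (kinetic μ e + 2 * μ) * (kinetic μ a + 2 * μ)
    + a * (kinetic μ e + 2 * μ) * (kinetic μ b + 2 * μ)
    - e * (kinetic μ a + 2 * μ) * (kinetic μ b + 2 * μ) + 3 * e * a * b

lemma hcub_eq {μ : ℝ} (v₀ : ℝ) {k p l : ℝ} (hμ : 0 ≤ μ) (hk : 0 < disp μ k) (hp : 0 < disp μ p)
    (hl : 0 < disp μ l) :
    hcub μ v₀ k p l = √(μ * v₀) * vertexNum μ (disp μ k) (disp μ p) (disp μ l)
      / (2 * (√(disp μ k * (kinetic μ (disp μ k) + 2 * μ))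
        * √(disp μ p * (kinetic μ (disp μ p) + 2 * μ))
        * √(disp μ l * (kinetic μ (disp μ l) + 2 * μ)))) := by
  have hq : ∀ ε, 0 < ε → 0 < √(ε * (kinetic μ ε + 2 * μ)) := fun ε hε =>
    Real.sqrt_pos.mpr (mul_pos hε (kinetic_add_two_mul_pos μ hε.ne'))
  have := hq _ hk
  have := hq _ hp
  have := hq _ hl
  rw [hcub, sig_eq hμ hk, gam_eq hμ hk, sig_eq hμ hp, gam_eq hμ hp, sig_eq hμ hl, gam_eq hμ hl,
    vertexNum]
  field_simp
  ring

lemma hcub_sq {μ v₀ k p l : ℝ} (hμ : 0 ≤ μ) (hv : 0 ≤ v₀) (hk : 0 < disp μ k)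
    (hp : 0 < disp μ p) (hl : 0 < disp μ l) :
    hcub μ v₀ k p l ^ 2 = μ * v₀ * vertexNum μ (disp μ k) (disp μ p) (disp μ l) ^ 2
      / (4 * (disp μ k * (kinetic μ (disp μ k) + 2 * μ))
        * (disp μ p * (kinetic μ (disp μ p) + 2 * μ))
        * (disp μ l * (kinetic μ (disp μ l) + 2 * μ))) := by
  have hq : ∀ ε, 0 < ε → √(ε * (kinetic μ ε + 2 * μ)) ^ 2 = ε * (kinetic μ ε + 2 * μ) :=
    fun ε hε => Real.sq_sqrt (mul_pos hε (kinetic_add_two_mul_pos μ hε.ne')).le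
  rw [hcub_eq v₀ hμ hk hp hl, div_pow, mul_pow, mul_pow, mul_pow, mul_pow,
    Real.sq_sqrt (mul_nonneg hμ hv),
    hq _ hk, hq _ hp, hq _ hl]
  ring

lemma A1_eq (μ x y : ℝ) : A1 μ x y = 2 * (kinetic μ ((x + y) / 2) + μ) := by
  rw [A1, kinetic_add, show (x + y) ^ 2 + 4 * μ ^ 2 = 2 ^ 2 * (((x + y) / 2) ^ 2 + μ ^ 2) by ring,
    Real.sqrt_mul (by positivity), Real.sqrt_sq zero_le_two]

lemma A2_eq (μ x y : ℝ) : A2 μ x y = 2 * (kinetic μ ((x - y) / 2) + μ) := by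
  rw [A2, kinetic_add, show (x - y) ^ 2 + 4 * μ ^ 2 = 2 ^ 2 * (((x - y) / 2) ^ 2 + μ ^ 2) by ring,
    Real.sqrt_mul (by positivity), Real.sqrt_sq zero_le_two]

noncomputable def integrandDen (μ e a b : ℝ) : ℝ :=
  (kinetic μ e + 2 * μ) * (kinetic μ a + 2 * μ) * (kinetic μ b + 2 * μ)
    * (kinetic μ a + μ) * (kinetic μ b + μ)

noncomputable def onShellIntegrand (μ v₀ e a b : ℝ) : ℝ :=
  μ * v₀ * vertexNum μ e a b ^ 2 / (4 * e * integrandDen μ e a b)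

lemma kinetic_add_pos (μ : ℝ) {ε : ℝ} (hε : 0 < ε) : 0 < kinetic μ ε + μ := by
  rw [kinetic_add]; positivity

lemma integrand_eq {μ v₀ k y : ℝ} (hμ : 0 ≤ μ) (hv : 0 ≤ v₀)
    (hy : y ∈ Set.Ioo (-disp μ k) (disp μ k)) :
    hcub μ v₀ k (pp μ k y) (ll μ k y) ^ 2 * (disp μ k ^ 2 - y ^ 2)
        / (A1 μ (disp μ k) y * A2 μ (disp μ k) y)
      = onShellIntegrand μ v₀ (disp μ k) ((disp μ k + y) / 2) ((disp μ k - y) / 2) := by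
  obtain ⟨hy₁, hy₂⟩ := hy
  have hp := disp_pp μ k y (by linarith)
  have hl := disp_ll μ k y hy₂.le
  have he : 0 < disp μ k := by linarith
  have ha : 0 < (disp μ k + y) / 2 := by linarith
  have hb : 0 < (disp μ k - y) / 2 := by linarith
  rw [hcub_sq hμ hv he (hp ▸ ha) (hl ▸ hb), hp, hl, A1_eq, A2_eq, onShellIntegrand,
    integrandDen]
  have := kinetic_add_two_mul_pos μ he.ne'
  have := kinetic_add_two_mul_pos μ ha.ne'
  have := kinetic_add_two_mul_pos μ hb.ne'
  have := kinetic_add_pos μ ha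
  have := kinetic_add_pos μ hb
  -- keeps `field_simp` from normalising the arguments of `kinetic`
  generalize vertexNum μ _ _ _ = T
  generalize kinetic μ (disp μ k) = r₀ at *
  generalize kinetic μ ((disp μ k + y) / 2) = r₁ at *
  generalize kinetic μ ((disp μ k - y) / 2) = r₂ at *
  have : disp μ k + y ≠ 0 := by linarith
  have : disp μ k - y ≠ 0 := by linarith
  field_simp
  ring

lemma vertexNum_sub_eq (μ : ℝ) {e a b : ℝ} (hab : a + b = e) :
    vertexNum μ e a b - 6 * e * a * b
      = b * kinetic μ e * kinetic μ a + a * kinetic μ e * kinetic μ b + a * kinetic μ a ^ 2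
        + b * kinetic μ b ^ 2 - e * kinetic μ a * kinetic μ b - e * kinetic μ e ^ 2 := by
  rw [vertexNum]
  linear_combination e * kinetic_mul_add μ e - a * kinetic_mul_add μ a - b * kinetic_mul_add μ b
    + (4 * μ ^ 2 + 2 * μ * (kinetic μ e + kinetic μ a + kinetic μ b)
      - (e ^ 2 + a ^ 2 + b ^ 2 + e * a + e * b - a * b)) * hab

lemma kinetic_mem_Icc {μ e x : ℝ} (hμ : 0 < μ) (hx : x ∈ Set.Icc 0 e) :
    kinetic μ x ∈ Set.Icc 0 (e ^ 2 / (2 * μ)) :=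
  ⟨kinetic_nonneg μ x, (kinetic_le hμ x).trans <|
    div_le_div_of_nonneg_right (pow_le_pow_left₀ hx.1 hx.2 2) (by positivity)⟩

lemma abs_vertexNum_sub_le {μ e a b : ℝ} (hμ : 0 < μ) (ha : 0 ≤ a) (hb : 0 ≤ b)
    (hab : a + b = e) :
    |vertexNum μ e a b - 6 * e * a * b| ≤ 2 * e * (e ^ 2 / (2 * μ)) ^ 2 := by
  obtain ⟨h₀, h₀'⟩ := kinetic_mem_Icc hμ (⟨by linarith, le_rfl⟩ : e ∈ Set.Icc 0 e)
  obtain ⟨h₁, h₁'⟩ := kinetic_mem_Icc hμ (⟨ha, by linarith⟩ : a ∈ Set.Icc 0 e)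
  obtain ⟨h₂, h₂'⟩ := kinetic_mem_Icc hμ (⟨hb, by linarith⟩ : b ∈ Set.Icc 0 e)
  rw [vertexNum_sub_eq μ hab]
  generalize e ^ 2 / (2 * μ) = ρ at *
  generalize kinetic μ e = r₀ at *
  generalize kinetic μ a = r₁ at *
  generalize kinetic μ b = r₂ at *
  have p₀₁ : r₀ * r₁ ≤ ρ ^ 2 := by nlinarith
  have p₀₂ : r₀ * r₂ ≤ ρ ^ 2 := by nlinarith
  have p₁₂ : r₁ * r₂ ≤ ρ ^ 2 := by nlinarith
  have p₀ : r₀ ^ 2 ≤ ρ ^ 2 := by nlinarith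
  have p₁ : r₁ ^ 2 ≤ ρ ^ 2 := by nlinarith
  have p₂ : r₂ ^ 2 ≤ ρ ^ 2 := by nlinarith
  rw [abs_le]
  constructor <;> nlinarith [mul_nonneg h₀ h₁, mul_nonneg h₀ h₂, mul_nonneg h₁ h₂,
    sq_nonneg r₀, sq_nonneg r₁, sq_nonneg r₂]

lemma cube_mul_sq_le {μ ρ : ℝ} (hρ : 0 ≤ ρ) (hρμ : ρ ≤ μ) :
    (2 * μ + ρ) ^ 3 * (μ + ρ) ^ 2 ≤ 8 * μ ^ 5 + 100 * μ ^ 4 * ρ := by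
  have hμ : 0 ≤ μ := hρ.trans hρμ
  nlinarith [mul_nonneg (mul_nonneg (pow_nonneg hμ 3) hρ) (sub_nonneg.2 hρμ),
    mul_nonneg (mul_nonneg (pow_nonneg hμ 2) (pow_nonneg hρ 2)) (sub_nonneg.2 hρμ),
    mul_nonneg (mul_nonneg hμ (pow_nonneg hρ 3)) (sub_nonneg.2 hρμ),
    mul_nonneg (pow_nonneg hρ 4) (sub_nonneg.2 hρμ)]

lemma integrandDen_mem_Icc {μ e a b : ℝ} (hμ : 0 < μ) (ha : 0 ≤ a) (hb : 0 ≤ b)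
    (hab : a + b = e) (he : e ≤ μ) :
    integrandDen μ e a b ∈ Set.Icc (8 * μ ^ 5) (8 * μ ^ 5 + 50 * μ ^ 3 * e ^ 2) := by
  have hρμ : e ^ 2 / (2 * μ) ≤ μ := by
    rw [div_le_iff₀ (by positivity)]; nlinarith
  have hρ : 50 * μ ^ 3 * e ^ 2 = 100 * μ ^ 4 * (e ^ 2 / (2 * μ)) := by field_simp; ring
  obtain ⟨h₀, h₀'⟩ := kinetic_mem_Icc hμ (⟨by linarith, le_rfl⟩ : e ∈ Set.Icc 0 e)
  obtain ⟨h₁, h₁'⟩ := kinetic_mem_Icc hμ (⟨ha, by linarith⟩ : a ∈ Set.Icc 0 e)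
  obtain ⟨h₂, h₂'⟩ := kinetic_mem_Icc hμ (⟨hb, by linarith⟩ : b ∈ Set.Icc 0 e)
  rw [integrandDen, hρ]
  generalize e ^ 2 / (2 * μ) = ρ at *
  generalize kinetic μ e = r₀ at *
  generalize kinetic μ a = r₁ at *
  generalize kinetic μ b = r₂ at *
  have hρ₀ : 0 ≤ ρ := h₀.trans h₀'
  constructor
  · calc 8 * μ ^ 5 = (0 + 2 * μ) * (0 + 2 * μ) * (0 + 2 * μ) * (0 + μ) * (0 + μ) := by ring
      _ ≤ _ := by gcongr
  · calc _ ≤ (ρ + 2 * μ) * (ρ + 2 * μ) * (ρ + 2 * μ) * (ρ + μ) * (ρ + μ) := by gcongr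
      _ = (2 * μ + ρ) ^ 3 * (μ + ρ) ^ 2 := by ring
      _ ≤ 8 * μ ^ 5 + 100 * μ ^ 4 * ρ := cube_mul_sq_le hρ₀ hρμ

lemma abs_sq_div_sub_sq_div_le {x x₀ d d₀ δ Δ : ℝ} (hd₀ : 0 < d₀) (hd : d ∈ Set.Icc d₀ (d₀ + Δ))
    (hx₀ : 0 ≤ x₀) (hx : |x - x₀| ≤ δ) :
    |x ^ 2 / d - x₀ ^ 2 / d₀| ≤ (δ * (2 * x₀ + δ) + x₀ ^ 2 * Δ / d₀) / d₀ := by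
  obtain ⟨hd, hdΔ⟩ := hd
  have hd' : 0 < d := hd₀.trans_le hd
  have hΔ : 0 ≤ Δ := by linarith
  have hsq : |x ^ 2 - x₀ ^ 2| ≤ δ * (2 * x₀ + δ) := by
    rw [sq_sub_sq, abs_mul, mul_comm]
    have : |x + x₀| ≤ 2 * x₀ + δ := by
      calc |x + x₀| = |(x - x₀) + 2 * x₀| := by ring_nf
        _ ≤ |x - x₀| + |2 * x₀| := abs_add_le _ _
        _ ≤ δ + 2 * x₀ := by rw [abs_of_nonneg (by positivity : 0 ≤ 2 * x₀)]; linarith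
        _ = 2 * x₀ + δ := by ring
    exact mul_le_mul hx this (abs_nonneg _) ((abs_nonneg _).trans hx)
  have hsplit : x ^ 2 / d - x₀ ^ 2 / d₀ = (x ^ 2 - x₀ ^ 2) / d - x₀ ^ 2 * (d - d₀) / (d * d₀) := by
    field_simp
    ring
  rw [hsplit]
  calc _ ≤ |(x ^ 2 - x₀ ^ 2) / d| + |x₀ ^ 2 * (d - d₀) / (d * d₀)| := abs_sub _ _
    _ = |x ^ 2 - x₀ ^ 2| / d + x₀ ^ 2 * (d - d₀) / (d * d₀) := by
        have := sub_nonneg.2 hd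
        rw [abs_div, abs_of_pos hd',
          abs_of_nonneg (by positivity : 0 ≤ x₀ ^ 2 * (d - d₀) / (d * d₀))]
    _ ≤ δ * (2 * x₀ + δ) / d₀ + x₀ ^ 2 * Δ / (d₀ * d₀) := by
        gcongr
        · exact (abs_nonneg _).trans hsq
        · linarith
    _ = _ := by ring

lemma abs_onShellIntegrand_sub_le {μ v₀ e a b : ℝ} (hμ : 0 < μ) (hv : 0 ≤ v₀) (ha : 0 ≤ a)
    (hb : 0 ≤ b) (hab : a + b = e) (he₀ : 0 < e) (he : e ≤ μ) :
    |onShellIntegrand μ v₀ e a b - 9 * v₀ / (8 * μ ^ 4) * e * a ^ 2 * b ^ 2|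
      ≤ v₀ * e ^ 7 / μ ^ 6 := by
  have hD := integrandDen_mem_Icc hμ ha hb hab he
  have hab₀ : a * b ≤ e ^ 2 / 4 := by nlinarith [sq_nonneg (a - b)]
  have ht : 6 * e * a * b ≤ 3 * e ^ 3 / 2 := by nlinarith
  have hδ : 2 * e * (e ^ 2 / (2 * μ)) ^ 2 = e ^ 5 / (2 * μ ^ 2) := by field_simp
  have hδe : e ^ 5 / (2 * μ ^ 2) ≤ e ^ 3 / 2 := by
    rw [div_le_div_iff₀ (by positivity) (by positivity)]
    have : e ^ 2 ≤ μ ^ 2 := pow_le_pow_left₀ he₀.le he 2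
    nlinarith [pow_pos he₀ 3]
  have key := abs_sq_div_sub_sq_div_le (by positivity) hD (by positivity)
    ((abs_vertexNum_sub_le hμ ha hb hab).trans_eq hδ)
  have hsplit : onShellIntegrand μ v₀ e a b - 9 * v₀ / (8 * μ ^ 4) * e * a ^ 2 * b ^ 2
      = μ * v₀ / (4 * e) * (vertexNum μ e a b ^ 2 / integrandDen μ e a b
        - (6 * e * a * b) ^ 2 / (8 * μ ^ 5)) := by
    rw [onShellIntegrand]
    field_simp
    ring
  rw [hsplit, abs_mul, abs_of_nonneg (by positivity)]
  calc _ ≤ μ * v₀ / (4 * e) * ((e ^ 5 / (2 * μ ^ 2) * (2 * (6 * e * a * b) + e ^ 5 / (2 * μ ^ 2))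
          + (6 * e * a * b) ^ 2 * (50 * μ ^ 3 * e ^ 2) / (8 * μ ^ 5)) / (8 * μ ^ 5)) := by
        gcongr
    _ ≤ μ * v₀ / (4 * e) * ((e ^ 5 / (2 * μ ^ 2) * (2 * (3 * e ^ 3 / 2) + e ^ 3 / 2)
          + (3 * e ^ 3 / 2) ^ 2 * (50 * μ ^ 3 * e ^ 2) / (8 * μ ^ 5)) / (8 * μ ^ 5)) := by
        gcongr
    _ = 253 / 512 * (v₀ * e ^ 7 / μ ^ 6) := by field_simp; ring
    _ ≤ v₀ * e ^ 7 / μ ^ 6 := by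
        have : 0 ≤ v₀ * e ^ 7 / μ ^ 6 := by positivity
        linarith

lemma integral_mul_sq_mul_sq (c e : ℝ) :
    ∫ y in -e..e, c * e * ((e + y) / 2) ^ 2 * ((e - y) / 2) ^ 2 = c * e ^ 6 / 15 := by
  have h : (fun y : ℝ => c * e * ((e + y) / 2) ^ 2 * ((e - y) / 2) ^ 2)
      = fun y => c * e / 16 * (e ^ 4 - 2 * e ^ 2 * y ^ 2 + y ^ 4) := by
    ext y; ring
  rw [h, intervalIntegral.integral_const_mul, intervalIntegral.integral_add,
    intervalIntegral.integral_sub]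
  · simp only [integral_pow, intervalIntegral.integral_const_mul, intervalIntegral.integral_const,
      sub_neg_eq_add, smul_eq_mul, Nat.reduceAdd, Nat.cast_ofNat]
    ring
  all_goals exact Continuous.intervalIntegrable (by fun_prop) _ _

lemma continuous_kinetic (μ : ℝ) : Continuous (kinetic μ) := by
  unfold kinetic; fun_prop

lemma integrandDen_pos {μ : ℝ} (hμ : 0 < μ) (e a b : ℝ) : 0 < integrandDen μ e a b := by
  have := kinetic_nonneg μ e
  have := kinetic_nonneg μ a
  have := kinetic_nonneg μ b
  unfold integrandDen
  positivity

lemma continuous_onShellIntegrand {μ : ℝ} (hμ : 0 < μ) (v₀ : ℝ) {e : ℝ} (he : 0 < e) :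
    Continuous fun y => onShellIntegrand μ v₀ e ((e + y) / 2) ((e - y) / 2) := by
  have := continuous_kinetic μ
  refine Continuous.div (by unfold vertexNum; fun_prop) (by unfold integrandDen; fun_prop)
    fun y => ?_
  have := integrandDen_pos hμ e ((e + y) / 2) ((e - y) / 2)
  positivity

lemma I_eq_integral {μ v₀ k : ℝ} (hμ : 0 ≤ μ) (hv : 0 ≤ v₀) (hk : 0 ≤ disp μ k) :
    I μ v₀ k = ∫ y in -disp μ k..disp μ k,
      onShellIntegrand μ v₀ (disp μ k) ((disp μ k + y) / 2) ((disp μ k - y) / 2) := by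
  rw [I, intervalIntegral.integral_of_le (by linarith),
    intervalIntegral.integral_of_le (by linarith),
    integral_Ioc_eq_integral_Ioo, integral_Ioc_eq_integral_Ioo]
  exact setIntegral_congr_fun measurableSet_Ioo fun y hy => integrand_eq hμ hv hy

lemma abs_I_sub_le {μ v₀ k : ℝ} (hμ : 0 < μ) (hv : 0 ≤ v₀) (hk : 0 < disp μ k)
    (hkμ : disp μ k ≤ μ) :
    |I μ v₀ k - 3 * v₀ * disp μ k ^ 6 / (40 * μ ^ 4)| ≤ 2 * v₀ * disp μ k ^ 8 / μ ^ 6 := by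
  rw [I_eq_integral hμ.le hv hk.le]
  set e := disp μ k
  have hP := integral_mul_sq_mul_sq (9 * v₀ / (8 * μ ^ 4)) e
  rw [show 3 * v₀ * e ^ 6 / (40 * μ ^ 4) = 9 * v₀ / (8 * μ ^ 4) * e ^ 6 / 15 by ring, ← hP,
    ← intervalIntegral.integral_sub ((continuous_onShellIntegrand hμ v₀ hk).intervalIntegrable _ _)
      (Continuous.intervalIntegrable (by fun_prop) _ _)]
  rw [← Real.norm_eq_abs]
  calc _ ≤ v₀ * e ^ 7 / μ ^ 6 * |e - -e| :=
        intervalIntegral.norm_integral_le_of_norm_le_const fun y hy => by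
          rw [Set.uIoc_of_le (by linarith), Set.mem_Ioc] at hy
          rw [Real.norm_eq_abs]
          exact abs_onShellIntegrand_sub_le hμ hv (by linarith) (by linarith) (by ring) hk hkμ
    _ = _ := by rw [abs_of_pos (by linarith)]; ring

lemma disp_eq_abs_mul (μ k : ℝ) : disp μ k = |k| * √(μ + k ^ 2 / 4) := by
  rw [disp, show k ^ 4 / 4 + μ * k ^ 2 = k ^ 2 * (μ + k ^ 2 / 4) by ring,
    Real.sqrt_mul (sq_nonneg k), Real.sqrt_sq_eq_abs]

lemma disp_pos {μ k : ℝ} (hμ : 0 ≤ μ) (hk : 0 < k) : 0 < disp μ k := by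
  rw [disp]; positivity

lemma tendsto_disp (μ : ℝ) : Tendsto (disp μ) (𝓝 0) (𝓝 0) := by
  have : Continuous (disp μ) := by unfold disp; fun_prop
  simpa [disp] using this.tendsto 0

lemma disp_isBigO (μ : ℝ) : disp μ =O[𝓝 0] fun k => k := by
  have h : (fun k : ℝ => √(μ + k ^ 2 / 4)) =O[𝓝 0] fun _ => (1 : ℝ) :=
    ((by fun_prop : Continuous fun k : ℝ => √(μ + k ^ 2 / 4)).tendsto 0).isBigO_one ℝ
  simpa [← disp_eq_abs_mul] using (isBigO_abs_left.2 (isBigO_refl (fun k : ℝ => k) _)).mul h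

lemma disp_pow_six_sub_isBigO {μ : ℝ} (hμ : 0 ≤ μ) :
    (fun k => disp μ k ^ 6 - μ ^ 3 * k ^ 6) =O[𝓝 0] fun k => k ^ 8 := by
  have h : (fun k : ℝ => 3 * μ ^ 2 / 4 + 3 * μ * k ^ 2 / 16 + k ^ 4 / 64) =O[𝓝 0]
      fun _ => (1 : ℝ) :=
    ((by fun_prop : Continuous fun k : ℝ => 3 * μ ^ 2 / 4 + 3 * μ * k ^ 2 / 16 + k ^ 4 / 64).tendsto
      0).isBigO_one ℝ
  have hid : (fun k => disp μ k ^ 6 - μ ^ 3 * k ^ 6)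
      = fun k => k ^ 8 * (3 * μ ^ 2 / 4 + 3 * μ * k ^ 2 / 16 + k ^ 4 / 64) := by
    ext k
    rw [show disp μ k ^ 6 = (disp μ k ^ 2) ^ 3 by ring, disp, Real.sq_sqrt (by positivity)]
    ring
  simpa [hid] using (isBigO_refl (fun k : ℝ => k ^ 8) _).mul h

lemma I_sub_isBigO {μ v₀ : ℝ} (hμ : 0 < μ) (hv : 0 ≤ v₀) :
    (fun k => I μ v₀ k - 3 * v₀ / (40 * μ) * k ^ 6) =O[𝓝[>] 0] fun k => k ^ 8 := by
  have hI : (fun k => I μ v₀ k - 3 * v₀ * disp μ k ^ 6 / (40 * μ ^ 4)) =O[𝓝[>] 0]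
      fun k => disp μ k ^ 8 := by
    refine IsBigO.of_bound (2 * v₀ / μ ^ 6) ?_
    filter_upwards [self_mem_nhdsWithin,
      nhdsWithin_le_nhds ((tendsto_disp μ).eventually (eventually_le_nhds hμ))] with k hk hkμ
    rw [Real.norm_eq_abs, Real.norm_eq_abs, abs_of_nonneg (by positivity : 0 ≤ disp μ k ^ 8)]
    calc _ ≤ 2 * v₀ * disp μ k ^ 8 / μ ^ 6 := abs_I_sub_le hμ hv (disp_pos hμ.le hk) hkμ
      _ = _ := by ring
  have hid : (fun k => I μ v₀ k - 3 * v₀ / (40 * μ) * k ^ 6)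
      = fun k => (I μ v₀ k - 3 * v₀ * disp μ k ^ 6 / (40 * μ ^ 4))
        + 3 * v₀ / (40 * μ ^ 4) * (disp μ k ^ 6 - μ ^ 3 * k ^ 6) := by
    ext k; field_simp; ring
  rw [hid]
  exact (hI.trans (((disp_isBigO μ).pow 8).mono nhdsWithin_le_nhds)).add
    (((disp_pow_six_sub_isBigO hμ.le).const_mul_left _).mono nhdsWithin_le_nhds)

theorem stmt1 (μ v₀ : ℝ) (hμ : 0 < μ) (hv : 0 < v₀) :
    (fun k => ImSigma μ v₀ k + (3*v₀/(320*Real.pi*μ)) * k^5)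
      =O[𝓝[>] (0:ℝ)] fun k => k^6 := by
  have hpre : (fun k : ℝ => -(1 / (8 * π * k))) =O[𝓝[>] 0] fun k => k⁻¹ :=
    (isBigO_refl (fun k : ℝ => k⁻¹) _).const_mul_left (-(1 / (8 * π))) |>.congr_left
      fun k => by ring
  have hseven : (fun k : ℝ => k⁻¹ * k ^ 8) =ᶠ[𝓝[>] 0] fun k => k ^ 7 := by
    filter_upwards [self_mem_nhdsWithin] with k (hk : 0 < k)
    field_simp
  refine ((hpre.mul (I_sub_isBigO hμ hv.le)).congr' ?_ hseven).trans
    ((isLittleO_pow_pow (by norm_num : 6 < 7)).isBigO.mono nhdsWithin_le_nhds)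
  filter_upwards [self_mem_nhdsWithin] with k (hk : 0 < k)
  rw [ImSigma]
  field_simp
  ring
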